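/- There is an absolute constant C > 0 such that for every n ≥ 1 and every weight function w : {1,…,n} → ℝ_{>0} with total weight W = ∑_{i=1}^n w(i), there exists a BST T_w on the key set {1,…,n} such that the depth of every key i satisfies d_{T_w}(i) ≤ C·(log(W / w(i)) + 1). -/
import Mathlib


/-- Binary trees with natural-number keys. -/
inductive BTree : Type where
  | leaf : BTree
  | node : BTree → ℕ → BTree → BTree

namespace BTree

/-- The set of keys appearing in the tree. -/
def keys : BTree → Finset ℕ
  | leaf => ∅
  | node l x r => keys l ∪ {x} ∪ keys r

/-- Binary search tree property: left keys smaller, right keys larger. -/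
def IsSearchTree : BTree → Prop
  | leaf => True
  | node l x r => (∀ y ∈ keys l, y < x) ∧ (∀ y ∈ keys r, x < y) ∧
      IsSearchTree l ∧ IsSearchTree r

/-- Depth of the key `y` (number of edges from the root), via the search path. -/
def depth : BTree → ℕ → ℕ
  | leaf, _ => 0
  | node l x r, y =>
      if y = x then 0
      else if y < x then depth l y + 1
      else depth r y + 1

/-- Number of edges on the path between the keys `a` and `b` (for a search tree). -/
def dist : BTree → ℕ → ℕ → ℕ
  | leaf, _, _ => 0
  | node l x r, a, b =>
      if a < x ∧ b < x then dist l a b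
      else if x < a ∧ x < b then dist r a b
      else depth (node l x r) a + depth (node l x r) b

/-- `T` is a binary search tree on the key set `{1, …, n}`. -/
def IsBSTOn (T : BTree) (n : ℕ) : Prop :=
  T.IsSearchTree ∧ T.keys = Finset.Icc 1 n

end BTree

open Classical in
noncomputable def med (w : ℕ → ℝ) (lo hi : ℕ) : ℕ :=
  let s := (Finset.Icc lo hi).filter
    (fun x => (∑ j ∈ Finset.Icc lo hi, w j) / 2 < ∑ j ∈ Finset.Icc lo x, w j)
  if h : s.Nonempty then s.min' h else hi

lemma med_mem (w : ℕ → ℝ) {lo hi : ℕ} (h : lo ≤ hi) : med w lo hi ∈ Finset.Icc lo hi := by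
  classical
  unfold med
  simp only
  split
  · next hne => exact Finset.filter_subset _ _ (Finset.min'_mem _ hne)
  · exact Finset.mem_Icc.mpr ⟨h, le_refl _⟩

noncomputable def build (w : ℕ → ℝ) (lo hi : ℕ) : BTree :=
  if h : 1 ≤ lo ∧ lo ≤ hi then
    BTree.node (build w lo (med w lo hi - 1)) (med w lo hi) (build w (med w lo hi + 1) hi)
  else BTree.leaf
termination_by hi + 1 - lo
decreasing_by
  · have := Finset.mem_Icc.mp (med_mem w h.2); omega
  · have := Finset.mem_Icc.mp (med_mem w h.2); omega
lemma sum_split (f : ℕ → ℝ) {lo m hi : ℕ} (h1 : lo ≤ m) (h2 : m ≤ hi) :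
    ∑ j ∈ Finset.Icc lo hi, f j
      = ∑ j ∈ Finset.Icc lo m, f j + ∑ j ∈ Finset.Icc (m+1) hi, f j := by
  rw [← Finset.sum_union (by
    rw [Finset.disjoint_left]
    intro a ha hb
    rw [Finset.mem_Icc] at ha hb
    omega)]
  apply Finset.sum_congr _ (fun _ _ => rfl)
  ext x
  simp only [Finset.mem_Icc, Finset.mem_union]
  omega

lemma med_spec (w : ℕ → ℝ) {lo hi : ℕ} (h1 : 1 ≤ lo) (h2 : lo ≤ hi)
    (hw : ∀ i ∈ Finset.Icc lo hi, 0 < w i) :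
    (∑ j ∈ Finset.Icc lo (med w lo hi - 1), w j) * 2 ≤ ∑ j ∈ Finset.Icc lo hi, w j ∧
    (∑ j ∈ Finset.Icc (med w lo hi + 1) hi, w j) * 2 ≤ ∑ j ∈ Finset.Icc lo hi, w j := by
  classical
  set W := ∑ j ∈ Finset.Icc lo hi, w j with hWdef
  have hW : 0 < W := Finset.sum_pos hw ⟨lo, Finset.mem_Icc.mpr ⟨le_refl _, h2⟩⟩
  set s := (Finset.Icc lo hi).filter (fun x => W / 2 < ∑ j ∈ Finset.Icc lo x, w j) with hs
  have hne : s.Nonempty := ⟨hi, by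
    rw [hs, Finset.mem_filter, Finset.mem_Icc]
    exact ⟨⟨h2, le_refl _⟩, by rw [← hWdef]; linarith⟩⟩
  have hmed : med w lo hi = s.min' hne := by
    unfold med
    rw [dif_pos]
  set m := med w lo hi with hm
  have hmem : m ∈ Finset.Icc lo hi := med_mem w h2
  rw [Finset.mem_Icc] at hmem
  have hminm : W / 2 < ∑ j ∈ Finset.Icc lo m, w j := by
    have := Finset.min'_mem s hne
    rw [← hmed] at this
    rw [hs, Finset.mem_filter] at this
    exact this.2
  constructor
  · rcases eq_or_lt_of_le hmem.1 with heq | hlt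
    · rw [show Finset.Icc lo (m - 1) = ∅ by
        apply Finset.Icc_eq_empty; omega]
      simp only [Finset.sum_empty]
      linarith
    · have hnot : m - 1 ∉ s := by
        intro hc
        have := Finset.min'_le s _ hc
        rw [← hmed] at this
        omega
      rw [hs, Finset.mem_filter, Finset.mem_Icc] at hnot
      push_neg at hnot
      have := hnot ⟨by omega, by omega⟩
      linarith
  · have hsplit := sum_split w hmem.1 hmem.2
    rw [← hWdef] at hsplit
    linarith

lemma build_spec (w : ℕ → ℝ) : ∀ N lo hi, hi + 1 - lo ≤ N → 1 ≤ lo →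
    (∀ i ∈ Finset.Icc lo hi, 0 < w i) →
    (build w lo hi).keys = Finset.Icc lo hi ∧ (build w lo hi).IsSearchTree ∧
    ∀ i ∈ Finset.Icc lo hi,
      w i * 2 ^ (build w lo hi).depth i ≤ ∑ j ∈ Finset.Icc lo hi, w j := by
  intro N
  induction N with
  | zero =>
    intro lo hi hN h1 hw
    have hlt : hi < lo := by omega
    rw [build, dif_neg (by omega)]
    refine ⟨?_, trivial, ?_⟩
    · rw [Finset.Icc_eq_empty (by omega)]; rfl
    · intro i hi'
      rw [Finset.mem_Icc] at hi'; omega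
  | succ N ih =>
    intro lo hi hN h1 hw
    rcases lt_or_ge hi lo with hlt | hle
    · rw [build, dif_neg (by omega)]
      refine ⟨?_, trivial, ?_⟩
      · rw [Finset.Icc_eq_empty (by omega)]; rfl
      · intro i hi'
        rw [Finset.mem_Icc] at hi'; omega
    · have hmem := Finset.mem_Icc.mp (med_mem w hle)
      set m := med w lo hi with hm
      have hwl : ∀ i ∈ Finset.Icc lo (m-1), 0 < w i := fun i hi' => by
        rw [Finset.mem_Icc] at hi'
        exact hw i (Finset.mem_Icc.mpr (by omega))
      have hwr : ∀ i ∈ Finset.Icc (m+1) hi, 0 < w i := fun i hi' => by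
        rw [Finset.mem_Icc] at hi'
        exact hw i (Finset.mem_Icc.mpr (by omega))
      obtain ⟨kl, sl, dl⟩ := ih lo (m-1) (by omega) h1 hwl
      obtain ⟨kr, sr, dr⟩ := ih (m+1) hi (by omega) (by omega) hwr
      have hbuild : build w lo hi
          = BTree.node (build w lo (m - 1)) m (build w (m + 1) hi) := by
        rw [build, dif_pos ⟨h1, hle⟩]
      obtain ⟨hL, hR⟩ := med_spec w h1 hle hw
      rw [← hm] at hL hR
      have hkeys : (build w lo hi).keys = Finset.Icc lo hi := by
        rw [hbuild]
        show (build w lo (m-1)).keys ∪ {m} ∪ (build w (m+1) hi).keys = _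
        rw [kl, kr]
        ext x
        simp only [Finset.mem_Icc, Finset.mem_union, Finset.mem_singleton]
        omega
      refine ⟨hkeys, ?_, ?_⟩
      · rw [hbuild]
        refine ⟨?_, ?_, sl, sr⟩
        · intro y hy
          rw [kl, Finset.mem_Icc] at hy
          omega
        · intro y hy
          rw [kr, Finset.mem_Icc] at hy
          omega
      · intro i hi'
        rw [Finset.mem_Icc] at hi'
        have hLnn : 0 ≤ ∑ j ∈ Finset.Icc lo (m-1), w j :=
          Finset.sum_nonneg fun j hj => (hwl j hj).le
        have hRnn : 0 ≤ ∑ j ∈ Finset.Icc (m+1) hi, w j :=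
          Finset.sum_nonneg fun j hj => (hwr j hj).le
        rw [hbuild]
        show w i * 2 ^ (BTree.depth (.node _ m _) i) ≤ _
        rw [BTree.depth]
        rcases lt_trichotomy i m with hc | hc | hc
        · rw [if_neg (by omega), if_pos hc, pow_succ]
          have := dl i (Finset.mem_Icc.mpr (by omega))
          calc w i * (2 ^ (build w lo (m-1)).depth i * 2)
              = (w i * 2 ^ (build w lo (m-1)).depth i) * 2 := by ring
            _ ≤ (∑ j ∈ Finset.Icc lo (m-1), w j) * 2 := by linarith
            _ ≤ _ := hL
        · rw [if_pos hc, pow_zero, mul_one]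
          exact Finset.single_le_sum (fun j hj => (hw j hj).le)
            (Finset.mem_Icc.mpr ⟨hi'.1, hi'.2⟩)
        · rw [if_neg (by omega), if_neg (by omega), pow_succ]
          have := dr i (Finset.mem_Icc.mpr (by omega))
          calc w i * (2 ^ (build w (m+1) hi).depth i * 2)
              = (w i * 2 ^ (build w (m+1) hi).depth i) * 2 := by ring
            _ ≤ (∑ j ∈ Finset.Icc (m+1) hi, w j) * 2 := by linarith
            _ ≤ _ := hR

/-- There is an absolute constant `C > 0` such that for every `n ≥ 1` and every positive
weight function `w` on `{1,…,n}` with total weight `W`, there is a BST `T_w` on `{1,…,n}`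
in which every key `i` has depth `d_{T_w}(i) ≤ C·(log₂(W / w(i)) + 1)`. -/
theorem bst_from_weights : ∃ C : ℝ, 0 < C ∧ ∀ (n : ℕ), 1 ≤ n →
    ∀ w : ℕ → ℝ, (∀ i ∈ Finset.Icc 1 n, 0 < w i) →
    ∃ T : BTree, T.IsBSTOn n ∧ ∀ i ∈ Finset.Icc 1 n,
      (BTree.depth T i : ℝ) ≤
        C * (Real.logb 2 ((∑ j ∈ Finset.Icc 1 n, w j) / w i) + 1) := by
  refine ⟨1, one_pos, ?_⟩
  intro n hn w hw
  obtain ⟨hk, hs, hd⟩ := build_spec w (n+1) 1 n (by omega) le_rfl hw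
  refine ⟨build w 1 n, ⟨hs, hk⟩, ?_⟩
  intro i hi
  have hwi := hw i hi
  have hb := hd i hi
  set d := (build w 1 n).depth i with hdd
  have h2 : (2:ℝ)^d ≤ (∑ j ∈ Finset.Icc 1 n, w j) / w i := by
    rw [le_div_iff₀ hwi, mul_comm]
    exact hb
  have hpos : 0 < (∑ j ∈ Finset.Icc 1 n, w j) / w i :=
    lt_of_lt_of_le (pow_pos two_pos d) h2
  have hlog : (d:ℝ) ≤ Real.logb 2 ((∑ j ∈ Finset.Icc 1 n, w j) / w i) := by
    rw [Real.le_logb_iff_rpow_le one_lt_two hpos, Real.rpow_natCast]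
    exact h2
  linarith
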